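/- Let a, b be an orthonormal pair in R³, S a symmetric 3×3 matrix, and define α = ⟨a, S a⟩⟨b,b⟩ + ⟨b, S b⟩⟨a,a⟩ − 2⟨a, S b⟩⟨a,b⟩. If G(t) is the Gram matrix of (A(t)a, A(t)b) where A(t) solves A' = L(t)A with A(t₀) = 1 and symmetric part of L(t₀) equal to S, then d/dt sqrt(det G(t)) |_{t=t₀} = α = ⟨a, S a⟩ + ⟨b, S b⟩. -/

import Mathlib

open Matrix

attribute [local instance] Matrix.normedAddCommGroup Matrix.normedSpace

/-!
Along the flow `A' = L A` with `A(t₀) = 1`, the product rule gives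
`d/dt ⟨A v, A w⟩ = ⟨L v, w⟩ + ⟨v, L w⟩ = 2 ⟨v, S w⟩` at `t₀`: only the symmetric part of `L`
survives. Since the Gram matrix of the orthonormal pair is the identity at `t₀`, the
derivative of its determinant is the trace `2 (⟨a, S a⟩ + ⟨b, S b⟩) = 2 α`, and
`d√x/dx = 1/2` at `x = det G(t₀) = 1`.
-/

section

variable {𝕜 m n : Type*} [NontriviallyNormedField 𝕜] [Fintype n]
  {u w : 𝕜 → n → 𝕜} {u' w' : n → 𝕜} {t : 𝕜}

theorem HasDerivAt.dotProduct (hu : HasDerivAt u u' t) (hw : HasDerivAt w w' t) :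
    HasDerivAt (fun s => u s ⬝ᵥ w s) (u' ⬝ᵥ w t + u t ⬝ᵥ w') t := by
  have := HasDerivAt.fun_sum fun i (_ : i ∈ Finset.univ) =>
    (hasDerivAt_pi.1 hu i).fun_mul (hasDerivAt_pi.1 hw i)
  rwa [Finset.sum_add_distrib] at this

theorem HasDerivAt.mulVec_const {A : 𝕜 → Matrix m n 𝕜} {A' : Matrix m n 𝕜}
    (hA : HasDerivAt A A' t) (v : n → 𝕜) :
    HasDerivAt (fun s => A s *ᵥ v) (A' *ᵥ v) t :=
  hasDerivAt_pi.2 fun i => HasDerivAt.fun_sum fun j (_ : j ∈ Finset.univ) =>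
    (hasDerivAt_pi.1 (hasDerivAt_pi.1 hA i) j).mul_const (v j)

theorem dotProduct_add_transpose_mulVec {R : Type*} [CommSemiring R] (L : Matrix n n R)
    (v w : n → R) :
    v ⬝ᵥ (L + Lᵀ) *ᵥ w = L *ᵥ v ⬝ᵥ w + v ⬝ᵥ L *ᵥ w := by
  rw [add_mulVec, dotProduct_add, dotProduct_mulVec v Lᵀ, vecMul_transpose, add_comm]

theorem hasDerivAt_mulVec_dotProduct_mulVec_of_eq_one [DecidableEq n] {A : 𝕜 → Matrix n n 𝕜}
    {L : Matrix n n 𝕜} (hA : HasDerivAt A L t) (hAt : A t = 1) (v w : n → 𝕜) :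
    HasDerivAt (fun s => A s *ᵥ v ⬝ᵥ A s *ᵥ w) (v ⬝ᵥ (L + Lᵀ) *ᵥ w) t := by
  have := (hA.mulVec_const v).dotProduct (hA.mulVec_const w)
  rwa [hAt, one_mulVec, one_mulVec, ← dotProduct_add_transpose_mulVec] at this

theorem hasDerivAt_det_gram_of_orthonormal [DecidableEq n] {A : 𝕜 → Matrix n n 𝕜}
    {L : Matrix n n 𝕜} (hA : HasDerivAt A L t) (hAt : A t = 1) {a b : n → 𝕜}
    (ha : a ⬝ᵥ a = 1) (hb : b ⬝ᵥ b = 1) (hab : a ⬝ᵥ b = 0) :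
    HasDerivAt
      (fun s => !![A s *ᵥ a ⬝ᵥ A s *ᵥ a, A s *ᵥ a ⬝ᵥ A s *ᵥ b;
                   A s *ᵥ b ⬝ᵥ A s *ᵥ a, A s *ᵥ b ⬝ᵥ A s *ᵥ b].det)
      (a ⬝ᵥ (L + Lᵀ) *ᵥ a + b ⬝ᵥ (L + Lᵀ) *ᵥ b) t := by
  have hgram := fun v w => hasDerivAt_mulVec_dotProduct_mulVec_of_eq_one hA hAt v w
  have := ((hgram a a).fun_mul (hgram b b)).fun_sub ((hgram a b).fun_mul (hgram b a))
  simp only [hAt, one_mulVec, ha, hb, hab, dotProduct_comm b a] at this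
  simpa only [det_fin_two_of, mul_one, one_mul, mul_zero, zero_mul, add_zero, sub_zero] using this

end

theorem area_stretch_rate_general
    (t₀ : ℝ) (a b : Fin 3 → ℝ)
    (ha : a ⬝ᵥ a = 1) (hb : b ⬝ᵥ b = 1) (hab : a ⬝ᵥ b = 0)
    (S : Matrix (Fin 3) (Fin 3) ℝ)
    (A L : ℝ → Matrix (Fin 3) (Fin 3) ℝ)
    (hA : ∀ t, HasDerivAt A (L t * A t) t) (hA0 : A t₀ = 1)
    (hL : (1 / 2 : ℝ) • (L t₀ + (L t₀)ᵀ) = S)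
    (G : ℝ → Matrix (Fin 2) (Fin 2) ℝ)
    (hG : ∀ t, G t = !![(A t).mulVec a ⬝ᵥ (A t).mulVec a,
                        (A t).mulVec a ⬝ᵥ (A t).mulVec b;
                        (A t).mulVec b ⬝ᵥ (A t).mulVec a,
                        (A t).mulVec b ⬝ᵥ (A t).mulVec b])
    (α : ℝ)
    (hα : α = (a ⬝ᵥ S.mulVec a) * (b ⬝ᵥ b) + (b ⬝ᵥ S.mulVec b) * (a ⬝ᵥ a)
            - 2 * (a ⬝ᵥ S.mulVec b) * (a ⬝ᵥ b)) :
    HasDerivAt (fun t => Real.sqrt (G t).det) α t₀ ∧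
    α = a ⬝ᵥ S.mulVec a + b ⬝ᵥ S.mulVec b := by
  have hα' : α = a ⬝ᵥ S *ᵥ a + b ⬝ᵥ S *ᵥ b := by rw [hα, ha, hb, hab]; ring
  have hsym (v : Fin 3 → ℝ) : v ⬝ᵥ (L t₀ + (L t₀)ᵀ) *ᵥ v = 2 * (v ⬝ᵥ S *ᵥ v) := by
    rw [← hL, smul_mulVec, dotProduct_smul, smul_eq_mul]; ring
  have hflow : HasDerivAt A (L t₀) t₀ := by simpa only [hA0, mul_one] using hA t₀
  have hdet : HasDerivAt (fun t => (G t).det) (2 * α) t₀ := by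
    simp only [hG]
    refine (hasDerivAt_det_gram_of_orthonormal hflow hA0 ha hb hab).congr_deriv ?_
    rw [hsym, hsym, hα']; ring
  have hdet0 : (G t₀).det = 1 := by
    rw [hG, det_fin_two_of, hA0, one_mulVec, one_mulVec, ha, hb, hab, dotProduct_comm b a, hab]
    norm_num
  refine ⟨?_, hα'⟩
  convert hdet.sqrt (by rw [hdet0]; exact one_ne_zero) using 1
  rw [hdet0, Real.sqrt_one]; ring

/-- For an orthonormal pair `a, b` in ℝ³ and the linearized flow `A' = L A`,
`A(t₀) = 1` with `sym L(t₀) = S`, the area-stretching factor `J = √(det G)` of the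
Gram matrix `G` of `(A a, A b)` satisfies
`dJ/dt |_{t₀} = α = ⟨a, Sa⟩ + ⟨b, Sb⟩`, where
`α = ⟨a,Sa⟩⟨b,b⟩ + ⟨b,Sb⟩⟨a,a⟩ − 2⟨a,Sb⟩⟨a,b⟩`. -/
theorem area_stretch_rate
    (t₀ : ℝ) (a b : Fin 3 → ℝ)
    (ha : a ⬝ᵥ a = 1) (hb : b ⬝ᵥ b = 1) (hab : a ⬝ᵥ b = 0)
    (S : Matrix (Fin 3) (Fin 3) ℝ) (hSsym : Sᵀ = S)
    (A L : ℝ → Matrix (Fin 3) (Fin 3) ℝ)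
    (hA : ∀ t, HasDerivAt A (L t * A t) t) (hA0 : A t₀ = 1)
    (hL : (1 / 2 : ℝ) • (L t₀ + (L t₀)ᵀ) = S)
    (G : ℝ → Matrix (Fin 2) (Fin 2) ℝ)
    (hG : ∀ t, G t = !![(A t).mulVec a ⬝ᵥ (A t).mulVec a,
                        (A t).mulVec a ⬝ᵥ (A t).mulVec b;
                        (A t).mulVec b ⬝ᵥ (A t).mulVec a,
                        (A t).mulVec b ⬝ᵥ (A t).mulVec b])
    (α : ℝ)
    (hα : α = (a ⬝ᵥ S.mulVec a) * (b ⬝ᵥ b) + (b ⬝ᵥ S.mulVec b) * (a ⬝ᵥ a)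
            - 2 * (a ⬝ᵥ S.mulVec b) * (a ⬝ᵥ b)) :
    HasDerivAt (fun t => Real.sqrt (G t).det) α t₀ ∧
    α = a ⬝ᵥ S.mulVec a + b ⬝ᵥ S.mulVec b :=
  area_stretch_rate_general t₀ a b ha hb hab S A L hA hA0 hL G hG α hα
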